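/- arXiv:0802.3010 — 2 statements merged into one kernel-verified Lean document; each statement's English description precedes it below -/
import Mathlib

section
/- Every expression A ∈ L(n) with n ≥ 2 can be written in exactly one way as a substitution A = p(B_1,…,B_m), where m ≥ 2, p ∈ P(m) is a prime expression, B_i ∈ L(n_i) with n_1 + ⋯ + n_m = n, and p(B_1,…,B_m) denotes the expression obtained from p by replacing its i-th symbol (the symbol of p carrying index i) by the expression B_i with all of B_i's indices shifted upward by n_1 + ⋯ + n_{i-1}. -/
/-- Formal expressions: complete binary bracketings with leaves labeled by natural numbers. -/
inductive BTree : Type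
  | leaf : ℕ → BTree
  | node : BTree → BTree → BTree
  deriving DecidableEq

namespace BTree

/-- The list of leaf labels, read from left to right. -/
def leaves : BTree → List ℕ
  | leaf i => [i]
  | node l r => leaves l ++ leaves r

/-- In every bracket `[u,v]`, the minimum index occurs inside `u`
and the maximum index occurs inside `v`. -/
def valid : BTree → Prop
  | leaf _ => True
  | node l r => valid l ∧ valid r ∧
      (∃ a ∈ leaves l, ∀ i ∈ leaves l ++ leaves r, a ≤ i) ∧
      (∃ b ∈ leaves r, ∀ i ∈ leaves l ++ leaves r, i ≤ b)

/-- Membership in `L n`: the leaf labels are exactly `1, …, n`, each occurring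
exactly once (in any order), and the min/max condition holds at every bracket. -/
def memL (n : ℕ) (t : BTree) : Prop :=
  (leaves t).Perm (List.range' 1 n) ∧ valid t

end BTree
namespace BTree

/-- Subexpression (subtree) relation. -/
inductive IsSubtree : BTree → BTree → Prop
  | refl (t : BTree) : IsSubtree t t
  | left {s l r : BTree} : IsSubtree s l → IsSubtree s (node l r)
  | right {s l r : BTree} : IsSubtree s r → IsSubtree s (node l r)

/-- A bracket is connected if its set of indices is an interval of consecutive integers. -/
def connected (t : BTree) : Prop := ∃ a b : ℕ, (leaves t).toFinset = Finset.Icc a b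

/-- Membership in `P n`: an element of `L n` is prime if the only connected
bracket it contains is the outermost one. -/
def memP (n : ℕ) (t : BTree) : Prop :=
  memL n t ∧ ∀ s l r : BTree, IsSubtree s t → s = node l r → s ≠ t → ¬ connected s

/-- Shift all leaf labels upward by `s`. -/
def shift (s : ℕ) : BTree → BTree
  | leaf i => leaf (i + s)
  | node l r => node (shift s l) (shift s r)

/-- Replace each leaf labeled `i` by the tree `f i`. -/
def graft (f : ℕ → BTree) : BTree → BTree
  | leaf i => f i
  | node l r => node (graft f l) (graft f r)

/-- Number of symbols (leaves). -/
def numLeaves (t : BTree) : ℕ := (leaves t).length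

/-- The substitution `p(B_1, …, B_m)`: the symbol of `p` carrying index `i`
is replaced by `B_i` with all of its indices shifted upward by
`n_1 + ⋯ + n_{i-1}`, where `n_j` is the number of symbols of `B_j`. -/
def substitute (p : BTree) (Bs : List BTree) : BTree :=
  graft (fun i =>
    shift (((Bs.take (i - 1)).map numLeaves).sum) (Bs.getD (i - 1) (leaf 0))) p

end BTree

/-!
Write `A = [l, r]`. The maximal connected subtrees of `l` and of `r` (the blocks of `A`) have
label sets that are intervals tiling `1, …, n`. Ordering the blocks by least label, collapsing
each one to its rank gives the skeleton `p`, and shifting each one down to start at `1` gives the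
`B_i`; then `A = p(B_1, …, B_m)`. The skeleton is prime: a connected bracket of `p` would graft
back to a connected proper subtree of `A` containing two different blocks, against maximality.

Conversely, in any decomposition `A = q(C_1, …, C_m)` every shifted `C_i` is a connected proper
subtree of `A`, hence lies in a block, and primality of `q` keeps each block inside a single
shifted `C_i`. So the shifted `C_i` are exactly the blocks in increasing order, which fixes the
`C_i`, and `q` is recovered because grafting trees with disjoint label sets is injective.
-/
namespace BTree

theorem leaves_ne_nil : ∀ t : BTree, leaves t ≠ []
  | leaf _ => List.cons_ne_nil _ _
  | node l _ => by simp [leaves, leaves_ne_nil l]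

theorem numLeaves_pos (t : BTree) : 0 < numLeaves t :=
  List.length_pos_iff.mpr (leaves_ne_nil t)

theorem memL.nodup {n : ℕ} {t : BTree} (h : memL n t) : (leaves t).Nodup :=
  h.1.nodup_iff.mpr List.nodup_range'

def minLabel : BTree → ℕ
  | leaf i => i
  | node l r => min (minLabel l) (minLabel r)

def maxLabel : BTree → ℕ
  | leaf i => i
  | node l r => max (maxLabel l) (maxLabel r)

theorem minLabel_mem : ∀ t : BTree, minLabel t ∈ leaves t
  | leaf _ => List.mem_singleton_self _
  | node l r => by
      rcases min_choice (minLabel l) (minLabel r) with h | h <;>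
        simp [minLabel, leaves, h, minLabel_mem l, minLabel_mem r]

theorem maxLabel_mem : ∀ t : BTree, maxLabel t ∈ leaves t
  | leaf _ => List.mem_singleton_self _
  | node l r => by
      rcases max_choice (maxLabel l) (maxLabel r) with h | h <;>
        simp [maxLabel, leaves, h, maxLabel_mem l, maxLabel_mem r]

theorem minLabel_le : ∀ {t : BTree} {i : ℕ}, i ∈ leaves t → minLabel t ≤ i
  | leaf _, _, h => (List.mem_singleton.mp h).ge
  | node _ _, _, h => by
      rcases List.mem_append.mp h with h | h
      · exact (min_le_left _ _).trans (minLabel_le h)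
      · exact (min_le_right _ _).trans (minLabel_le h)

theorem le_maxLabel : ∀ {t : BTree} {i : ℕ}, i ∈ leaves t → i ≤ maxLabel t
  | leaf _, _, h => (List.mem_singleton.mp h).le
  | node _ _, _, h => by
      rcases List.mem_append.mp h with h | h
      · exact (le_maxLabel h).trans (le_max_left _ _)
      · exact (le_maxLabel h).trans (le_max_right _ _)

theorem minLabel_eq_of_toFinset_eq_Icc {t : BTree} {a b : ℕ}
    (h : (leaves t).toFinset = Finset.Icc a b) : minLabel t = a ∧ maxLabel t = b := by
  have hmem : ∀ i, i ∈ leaves t ↔ a ≤ i ∧ i ≤ b := fun i => by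
    rw [← List.mem_toFinset, h, Finset.mem_Icc]
  have hmin := (hmem _).mp (minLabel_mem t)
  have hmax := (hmem _).mp (maxLabel_mem t)
  exact ⟨le_antisymm (minLabel_le ((hmem a).mpr ⟨le_rfl, by omega⟩)) hmin.1,
    le_antisymm hmax.2 (le_maxLabel ((hmem b).mpr ⟨by omega, le_rfl⟩))⟩

theorem connected_iff {t : BTree} :
    connected t ↔ (leaves t).toFinset = Finset.Icc (minLabel t) (maxLabel t) := by
  refine ⟨fun ⟨a, b, h⟩ => ?_, fun h => ⟨_, _, h⟩⟩
  obtain ⟨rfl, rfl⟩ := minLabel_eq_of_toFinset_eq_Icc h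
  exact h

instance : DecidablePred connected := fun _ => decidable_of_iff _ connected_iff.symm

theorem perm_range'_of_connected {t : BTree} (hc : connected t) (hn : (leaves t).Nodup) :
    (leaves t).Perm (List.range' (minLabel t) (numLeaves t)) := by
  refine List.perm_of_nodup_nodup_toFinset_eq hn List.nodup_range' ?_
  have hcard : numLeaves t = maxLabel t + 1 - minLabel t := by
    rw [numLeaves, ← List.toFinset_card_of_nodup hn, connected_iff.mp hc, Nat.card_Icc]
  rw [connected_iff.mp hc, List.toFinset_range'_1, hcard]
  ext x
  simp only [Finset.mem_Icc, Finset.mem_Ico]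
  omega

theorem valid_node_iff {l r : BTree} : valid (node l r) ↔
    valid l ∧ valid r ∧ minLabel l ≤ minLabel r ∧ maxLabel l ≤ maxLabel r := by
  have hmin : (∃ a ∈ leaves l, ∀ i ∈ leaves l ++ leaves r, a ≤ i) ↔ minLabel l ≤ minLabel r := by
    refine ⟨fun ⟨a, ha, h⟩ => (minLabel_le ha).trans (h _ (List.mem_append_right _ (minLabel_mem r))),
      fun h => ⟨minLabel l, minLabel_mem l, fun i hi => ?_⟩⟩
    rcases List.mem_append.mp hi with hi | hi
    exacts [minLabel_le hi, h.trans (minLabel_le hi)]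
  have hmax : (∃ b ∈ leaves r, ∀ i ∈ leaves l ++ leaves r, i ≤ b) ↔ maxLabel l ≤ maxLabel r := by
    refine ⟨fun ⟨b, hb, h⟩ => (h _ (List.mem_append_left _ (maxLabel_mem l))).trans (le_maxLabel hb),
      fun h => ⟨maxLabel r, maxLabel_mem r, fun i hi => ?_⟩⟩
    rcases List.mem_append.mp hi with hi | hi
    exacts [(le_maxLabel hi).trans h, le_maxLabel hi]
  rw [valid, hmin, hmax]

section IsSubtree

variable {s t u : BTree}

theorem IsSubtree.trans (h₁ : IsSubtree s t) (h₂ : IsSubtree t u) : IsSubtree s u := by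
  induction h₂ with
  | refl => exact h₁
  | left _ ih => exact .left ih
  | right _ ih => exact .right ih

theorem IsSubtree.sublist (h : IsSubtree s t) : (leaves s).Sublist (leaves t) := by
  induction h with
  | refl => exact List.Sublist.refl _
  | left _ ih => exact ih.trans (List.sublist_append_left _ _)
  | right _ ih => exact ih.trans (List.sublist_append_right _ _)

theorem IsSubtree.subset (h : IsSubtree s t) : leaves s ⊆ leaves t :=
  h.sublist.subset

theorem IsSubtree.valid (h : IsSubtree s t) (ht : valid t) : valid s := by
  induction h with
  | refl => exact ht
  | left _ ih => exact ih ht.1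
  | right _ ih => exact ih ht.2.1

theorem not_isSubtree_node_left (l r : BTree) : ¬ IsSubtree (node l r) l := fun h => by
  have := h.sublist.length_le
  have := numLeaves_pos r
  simp only [numLeaves, leaves, List.length_append] at *
  omega

theorem not_isSubtree_node_right (l r : BTree) : ¬ IsSubtree (node l r) r := fun h => by
  have := h.sublist.length_le
  have := numLeaves_pos l
  simp only [numLeaves, leaves, List.length_append] at *
  omega

theorem IsSubtree.antisymm (h₁ : IsSubtree s t) (h₂ : IsSubtree t s) : s = t := by
  cases h₁ with
  | refl => rfl
  | left h => exact absurd (h₂.trans h) (not_isSubtree_node_left _ _)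
  | right h => exact absurd (h₂.trans h) (not_isSubtree_node_right _ _)

end IsSubtree

section Shift

theorem leaves_shift (s : ℕ) : ∀ t, leaves (shift s t) = (leaves t).map (· + s)
  | leaf _ => rfl
  | node l r => by simp [leaves, shift, leaves_shift s l, leaves_shift s r]

def unshift (s : ℕ) : BTree → BTree
  | leaf i => leaf (i - s)
  | node l r => node (unshift s l) (unshift s r)

theorem leaves_unshift (s : ℕ) : ∀ t, leaves (unshift s t) = (leaves t).map (· - s)
  | leaf _ => rfl
  | node l r => by simp [leaves, unshift, leaves_unshift s l, leaves_unshift s r]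

theorem numLeaves_unshift (s : ℕ) (t : BTree) : numLeaves (unshift s t) = numLeaves t := by
  simp [numLeaves, leaves_unshift]

theorem unshift_shift (s : ℕ) : ∀ t, unshift s (shift s t) = t
  | leaf _ => by simp [shift, unshift]
  | node l r => by simp [shift, unshift, unshift_shift s l, unshift_shift s r]

theorem shift_unshift (s : ℕ) : ∀ {t}, (∀ i ∈ leaves t, s ≤ i) → shift s (unshift s t) = t
  | leaf i, h => by
      simp only [leaves, List.mem_singleton, forall_eq] at h
      simp only [shift, unshift, leaf.injEq]
      omega
  | node l r, h => by
      simp only [leaves, List.mem_append] at h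
      simp [shift, unshift, shift_unshift s (fun i hi => h i (Or.inl hi)),
        shift_unshift s (fun i hi => h i (Or.inr hi))]

theorem shift_eq_graft (s : ℕ) : ∀ t, shift s t = graft (fun i => leaf (i + s)) t
  | leaf _ => rfl
  | node l r => by rw [shift, graft, shift_eq_graft s l, shift_eq_graft s r]

end Shift

section Graft

variable {f : ℕ → BTree}

theorem leaves_graft (f : ℕ → BTree) :
    ∀ t, leaves (graft f t) = (leaves t).flatMap (fun i => leaves (f i))
  | leaf _ => by simp [graft, leaves]
  | node l r => by simp [graft, leaves, leaves_graft f l, leaves_graft f r]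

theorem isSubtree_graft (f : ℕ → BTree) : ∀ {t i}, i ∈ leaves t → IsSubtree (f i) (graft f t)
  | leaf _, _, h => List.mem_singleton.mp h ▸ .refl _
  | node _ _, _, h => by
      rcases List.mem_append.mp h with h | h
      exacts [.left (isSubtree_graft f h), .right (isSubtree_graft f h)]

theorem IsSubtree.graft (f : ℕ → BTree) {s t : BTree} (h : IsSubtree s t) :
    IsSubtree (graft f s) (graft f t) := by
  induction h with
  | refl => exact .refl _
  | left _ ih => exact .left ih
  | right _ ih => exact .right ih

theorem exists_of_isSubtree_graft : ∀ {q s}, IsSubtree s (graft f q) →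
    (∃ i ∈ leaves q, IsSubtree s (f i)) ∨
      ∃ u v, IsSubtree (node u v) q ∧ s = graft f (node u v)
  | leaf i, _, h => .inl ⟨i, List.mem_singleton_self i, h⟩
  | node q₁ q₂, _, h => by
      rcases h with _ | h | h
      · exact .inr ⟨q₁, q₂, .refl _, rfl⟩
      · rcases exists_of_isSubtree_graft h with ⟨i, hi, hs⟩ | ⟨u, v, huv, rfl⟩
        · exact .inl ⟨i, List.mem_append_left _ hi, hs⟩
        · exact .inr ⟨u, v, .left huv, rfl⟩
      · rcases exists_of_isSubtree_graft h with ⟨i, hi, hs⟩ | ⟨u, v, huv, rfl⟩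
        · exact .inl ⟨i, List.mem_append_right _ hi, hs⟩
        · exact .inr ⟨u, v, .right huv, rfl⟩

variable {S : Set ℕ}

theorem minLabel_graft (hf : MonotoneOn (fun i => minLabel (f i)) S) :
    ∀ {u}, (∀ i ∈ leaves u, i ∈ S) → minLabel (graft f u) = minLabel (f (minLabel u))
  | leaf _, _ => rfl
  | node u v, hS => by
      have hu : ∀ i ∈ leaves u, i ∈ S := fun i hi => hS i (List.mem_append_left _ hi)
      have hv : ∀ i ∈ leaves v, i ∈ S := fun i hi => hS i (List.mem_append_right _ hi)
      rw [graft, minLabel, minLabel, minLabel_graft hf hu, minLabel_graft hf hv,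
        hf.map_min (hu _ (minLabel_mem u)) (hv _ (minLabel_mem v))]

theorem maxLabel_graft (hf : MonotoneOn (fun i => maxLabel (f i)) S) :
    ∀ {u}, (∀ i ∈ leaves u, i ∈ S) → maxLabel (graft f u) = maxLabel (f (maxLabel u))
  | leaf _, _ => rfl
  | node u v, hS => by
      have hu : ∀ i ∈ leaves u, i ∈ S := fun i hi => hS i (List.mem_append_left _ hi)
      have hv : ∀ i ∈ leaves v, i ∈ S := fun i hi => hS i (List.mem_append_right _ hi)
      rw [graft, maxLabel, maxLabel, maxLabel_graft hf hu, maxLabel_graft hf hv,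
        hf.map_max (hu _ (maxLabel_mem u)) (hv _ (maxLabel_mem v))]

theorem valid_of_valid_graft (hmin : StrictMonoOn (fun i => minLabel (f i)) S)
    (hmax : StrictMonoOn (fun i => maxLabel (f i)) S) :
    ∀ {u}, (∀ i ∈ leaves u, i ∈ S) → valid (graft f u) → valid u
  | leaf _, _, _ => trivial
  | node u v, hS, h => by
      have hu : ∀ i ∈ leaves u, i ∈ S := fun i hi => hS i (List.mem_append_left _ hi)
      have hv : ∀ i ∈ leaves v, i ∈ S := fun i hi => hS i (List.mem_append_right _ hi)
      obtain ⟨hgu, hgv, hle_min, hle_max⟩ := valid_node_iff.mp h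
      rw [minLabel_graft hmin.monotoneOn hu, minLabel_graft hmin.monotoneOn hv,
        hmin.le_iff_le (hu _ (minLabel_mem u)) (hv _ (minLabel_mem v))] at hle_min
      rw [maxLabel_graft hmax.monotoneOn hu, maxLabel_graft hmax.monotoneOn hv,
        hmax.le_iff_le (hu _ (maxLabel_mem u)) (hv _ (maxLabel_mem v))] at hle_max
      exact valid_node_iff.mpr ⟨valid_of_valid_graft hmin hmax hu hgu,
        valid_of_valid_graft hmin hmax hv hgv, hle_min, hle_max⟩

theorem valid_of_valid_shift {s : ℕ} {t : BTree} (h : valid (shift s t)) : valid t := by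
  have hmono : StrictMono (· + s) := strictMono_id.add_const s
  rw [shift_eq_graft] at h
  exact valid_of_valid_graft (f := fun i => leaf (i + s)) (hmono.strictMonoOn Set.univ)
    (hmono.strictMonoOn Set.univ) (fun _ _ => Set.mem_univ _) h

section Injective

variable (hf : ∀ i ∈ S, ∀ j ∈ S, IsSubtree (f j) (f i) → j = i)
include hf

theorem graft_node_ne {u v : BTree} (hn : (leaves (node u v)).Nodup)
    (hS : ∀ j ∈ leaves (node u v), j ∈ S) {i : ℕ} (hi : i ∈ S) :
    graft f (node u v) ≠ f i := by
  intro h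
  obtain ⟨j₁, hj₁⟩ := List.exists_mem_of_ne_nil _ (leaves_ne_nil u)
  obtain ⟨j₂, hj₂⟩ := List.exists_mem_of_ne_nil _ (leaves_ne_nil v)
  have hsub : ∀ j ∈ leaves (node u v), j = i := fun j hj =>
    hf i hi j (hS j hj) (h ▸ isSubtree_graft f hj)
  have h₁ := hsub j₁ (List.mem_append_left _ hj₁)
  have h₂ := hsub j₂ (List.mem_append_right _ hj₂)
  exact List.disjoint_of_nodup_append hn hj₁ ((h₁.trans h₂.symm) ▸ hj₂)

theorem graft_injOn : ∀ {q q' : BTree}, (leaves q).Nodup → (leaves q').Nodup →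
    (∀ i ∈ leaves q, i ∈ S) → (∀ i ∈ leaves q', i ∈ S) → graft f q = graft f q' → q = q'
  | leaf i, leaf i', _, _, hS, hS', h => by
      have hsub : IsSubtree (f i') (f i) := by
        rw [show f i = f i' from h]
        exact .refl _
      rw [hf i (hS i (List.mem_singleton_self i)) i' (hS' i' (List.mem_singleton_self i')) hsub]
  | leaf i, node _ _, _, hn', hS, hS', h =>
      absurd h.symm (graft_node_ne hf hn' hS' (hS i (List.mem_singleton_self i)))
  | node _ _, leaf i', hn, _, hS, hS', h =>
      absurd h (graft_node_ne hf hn hS (hS' i' (List.mem_singleton_self i')))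
  | node u v, node u' v', hn, hn', hS, hS', h => by
      rw [graft, graft, node.injEq] at h
      rw [graft_injOn (List.nodup_append.mp hn).1 (List.nodup_append.mp hn').1
          (fun i hi => hS i (List.mem_append_left _ hi))
          (fun i hi => hS' i (List.mem_append_left _ hi)) h.1,
        graft_injOn (List.nodup_append.mp hn).2.1 (List.nodup_append.mp hn').2.1
          (fun i hi => hS i (List.mem_append_right _ hi))
          (fun i hi => hS' i (List.mem_append_right _ hi)) h.2]

end Injective

end Graft

section MaximalConnected

def maximalConnected : BTree → List BTree
  | leaf i => [leaf i]
  | node l r => if connected (node l r) then [node l r]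
      else maximalConnected l ++ maximalConnected r

theorem maximalConnected_of_connected {t : BTree} (h : connected t) : maximalConnected t = [t] := by
  cases t with
  | leaf _ => rfl
  | node _ _ => simp [maximalConnected, h]

theorem flatMap_leaves_maximalConnected : ∀ t : BTree,
    (maximalConnected t).flatMap leaves = leaves t
  | leaf _ => by simp [maximalConnected]
  | node l r => by
      by_cases h : connected (node l r)
      · simp [maximalConnected_of_connected h]
      · simp only [maximalConnected, h, if_false, List.flatMap_append,
          flatMap_leaves_maximalConnected l, flatMap_leaves_maximalConnected r, leaves]

theorem maximalConnected_ne_nil (t : BTree) : maximalConnected t ≠ [] := fun h =>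
  leaves_ne_nil t (by rw [← flatMap_leaves_maximalConnected, h, List.flatMap_nil])

theorem isSubtree_and_connected_of_mem_maximalConnected :
    ∀ {t B : BTree}, B ∈ maximalConnected t → IsSubtree B t ∧ connected B
  | leaf i, _, hB => by
      rw [List.mem_singleton.mp hB]
      exact ⟨.refl _, i, i, by simp [leaves]⟩
  | node l r, B, hB => by
      by_cases h : connected (node l r)
      · rw [maximalConnected_of_connected h, List.mem_singleton] at hB
        subst hB
        exact ⟨.refl _, h⟩
      · simp only [maximalConnected, h, if_false, List.mem_append] at hB
        rcases hB with hB | hB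
        · exact (isSubtree_and_connected_of_mem_maximalConnected hB).imp_left .left
        · exact (isSubtree_and_connected_of_mem_maximalConnected hB).imp_left .right

theorem exists_mem_maximalConnected {s t : BTree} (hs : IsSubtree s t) (hc : connected s) :
    ∃ B ∈ maximalConnected t, IsSubtree s B := by
  induction hs with
  | refl => exact ⟨_, by rw [maximalConnected_of_connected hc]; exact List.mem_singleton_self _,
      .refl _⟩
  | @left l r hsl ih =>
      by_cases h : connected (node l r)
      · exact ⟨_, by rw [maximalConnected_of_connected h]; exact List.mem_singleton_self _,
          .left hsl⟩
      · obtain ⟨B, hB, hsB⟩ := ih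
        exact ⟨B, by simp [maximalConnected, h, hB], hsB⟩
  | @right l r hsr ih =>
      by_cases h : connected (node l r)
      · exact ⟨_, by rw [maximalConnected_of_connected h]; exact List.mem_singleton_self _,
          .right hsr⟩
      · obtain ⟨B, hB, hsB⟩ := ih
        exact ⟨B, by simp [maximalConnected, h, hB], hsB⟩

/-- Collapse each maximal connected subtree `B` of `t` to a leaf labelled `rk B`. -/
def contract (rk : BTree → ℕ) : BTree → BTree
  | leaf i => leaf (rk (leaf i))
  | node l r => if connected (node l r) then leaf (rk (node l r))
      else node (contract rk l) (contract rk r)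

theorem leaves_contract (rk : BTree → ℕ) :
    ∀ t, leaves (contract rk t) = (maximalConnected t).map rk
  | leaf _ => rfl
  | node l r => by
      by_cases h : connected (node l r)
      · simp [contract, maximalConnected, h, leaves]
      · simp [contract, maximalConnected, h, leaves, leaves_contract rk l, leaves_contract rk r]

theorem graft_contract (rk : BTree → ℕ) (f : ℕ → BTree) :
    ∀ t, (∀ B ∈ maximalConnected t, f (rk B) = B) → graft f (contract rk t) = t
  | leaf i, hf => hf (leaf i) (List.mem_singleton_self _)
  | node l r, hf => by
      by_cases h : connected (node l r)
      · simp only [contract, h, if_true, graft]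
        exact hf _ (by rw [maximalConnected_of_connected h]; exact List.mem_singleton_self _)
      · simp only [maximalConnected, h, if_false, List.mem_append] at hf
        simp only [contract, h, if_false, graft]
        rw [graft_contract rk f l (fun B hB => hf B (.inl hB)),
          graft_contract rk f r (fun B hB => hf B (.inr hB))]

end MaximalConnected

section Pieces

def offset (L : List BTree) (k : ℕ) : ℕ := ((L.take k).map numLeaves).sum

def piece (Bs : List BTree) (i : ℕ) : BTree := shift (offset Bs (i - 1)) (Bs.getD (i - 1) (leaf 0))

theorem substitute_eq_graft (p : BTree) (Bs : List BTree) :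
    substitute p Bs = graft (piece Bs) p := rfl

def slot (L : List BTree) (i : ℕ) : Finset ℕ := Finset.Icc (offset L (i - 1) + 1) (offset L i)

variable {L : List BTree}

theorem offset_succ {k : ℕ} (hk : k < L.length) :
    offset L (k + 1) = offset L k + numLeaves (L.getD k (leaf 0)) := by
  simp only [offset, List.map_take]
  rw [List.sum_take_succ _ _ (by simpa using hk), List.getElem_map,
    List.getD_eq_getElem _ _ hk]

theorem offset_strictMonoOn : StrictMonoOn (offset L) (Set.Iic L.length) :=
  strictMonoOn_Iic_of_lt_succ fun k hk => by
    rw [Order.succ_eq_add_one, offset_succ hk]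
    exact Nat.lt_add_of_pos_right (numLeaves_pos _)

theorem offset_pred_lt {i : ℕ} (hi : i ∈ Set.Icc 1 L.length) : offset L (i - 1) < offset L i :=
  have ⟨hi₁, hi₂⟩ := hi
  offset_strictMonoOn (by simp only [Set.mem_Iic]; omega) hi₂ (by omega)

theorem eq_of_mem_slot {i j x : ℕ} (hi : i ∈ Set.Icc 1 L.length) (hj : j ∈ Set.Icc 1 L.length)
    (hxi : x ∈ slot L i) (hxj : x ∈ slot L j) : i = j := by
  obtain ⟨hi₁, hi₂⟩ := hi
  obtain ⟨hj₁, hj₂⟩ := hj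
  have hmono := offset_strictMonoOn (L := L).monotoneOn
  have h₁ : i ≤ j - 1 → offset L i ≤ offset L (j - 1) := fun h =>
    hmono hi₂ (by simp only [Set.mem_Iic]; omega) h
  have h₂ : j ≤ i - 1 → offset L j ≤ offset L (i - 1) := fun h =>
    hmono hj₂ (by simp only [Set.mem_Iic]; omega) h
  simp only [slot, Finset.mem_Icc] at hxi hxj
  omega

theorem biUnion_slot {c d : ℕ} (hc : 1 ≤ c) (hcd : c ≤ d) (hd : d ≤ L.length) :
    (Finset.Icc c d).biUnion (slot L) = Finset.Icc (offset L (c - 1) + 1) (offset L d) := by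
  induction d, hcd using Nat.le_induction with
  | base => simp [slot]
  | succ d hcd ih =>
      rw [show Finset.Icc c (d + 1) = insert (d + 1) (Finset.Icc c d) by ext; simp; omega,
        Finset.biUnion_insert, ih (by omega)]
      have h₁ : offset L d < offset L (d + 1) := offset_pred_lt (i := d + 1) ⟨by omega, hd⟩
      have h₂ := (offset_strictMonoOn (L := L)).monotoneOn
        (by simp only [Set.mem_Iic]; omega) (by simp only [Set.mem_Iic]; omega)
        (show c - 1 ≤ d by omega)
      ext x
      simp only [slot, Finset.mem_union, Finset.mem_Icc, Nat.add_sub_cancel]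
      omega

theorem offset_pred_add_one_mem_slot {i : ℕ} (hi : i ∈ Set.Icc 1 L.length) :
    offset L (i - 1) + 1 ∈ slot L i :=
  Finset.mem_Icc.mpr ⟨le_rfl, offset_pred_lt hi⟩

theorem offset_mem_slot {i : ℕ} (hi : i ∈ Set.Icc 1 L.length) : offset L i ∈ slot L i :=
  Finset.mem_Icc.mpr ⟨offset_pred_lt hi, le_rfl⟩

theorem mem_of_biUnion_slot_eq_Icc {K : Finset ℕ} (hK : ∀ i ∈ K, i ∈ Set.Icc 1 L.length)
    {x y : ℕ} (h : K.biUnion (slot L) = Finset.Icc x y) {c d z : ℕ} (hc : c ∈ K) (hd : d ∈ K)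
    (hcz : c ≤ z) (hzd : z ≤ d) : z ∈ K := by
  have ⟨hc₁, _⟩ := hK c hc
  have ⟨_, hd₂⟩ := hK d hd
  have hz : z ∈ Set.Icc 1 L.length := ⟨hc₁.trans hcz, hzd.trans hd₂⟩
  have hmem : ∀ i ∈ K, ∀ a ∈ slot L i, a ∈ Finset.Icc x y := fun i hi a ha =>
    h ▸ Finset.mem_biUnion.mpr ⟨i, hi, ha⟩
  have hlo := hmem c hc _ (offset_pred_add_one_mem_slot (hK c hc))
  have hhi := hmem d hd _ (offset_mem_slot (hK d hd))
  have hmono := (offset_strictMonoOn (L := L)).monotoneOn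
  have h₁ : offset L (c - 1) ≤ offset L (z - 1) :=
    hmono (by simp only [Set.mem_Iic]; omega) (by simp only [Set.mem_Iic]; omega) (by omega)
  have h₂ : offset L z ≤ offset L d := hmono hz.2 hd₂ hzd
  have h₃ := offset_pred_lt hz
  have hzxy : offset L (z - 1) + 1 ∈ Finset.Icc x y := by
    simp only [Finset.mem_Icc] at hlo hhi ⊢
    omega
  rw [← h] at hzxy
  obtain ⟨i, hi, hxi⟩ := Finset.mem_biUnion.mp hzxy
  rwa [eq_of_mem_slot (hK i hi) hz hxi (offset_pred_add_one_mem_slot hz)] at hi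

variable (hL : ∀ C ∈ L, (leaves C).Perm (List.range' 1 (numLeaves C)))
include hL

theorem toFinset_leaves_piece {i : ℕ} (hi : i ∈ Set.Icc 1 L.length) :
    (leaves (piece L i)).toFinset = slot L i := by
  have ⟨hi₁, hi₂⟩ := hi
  have hk : i - 1 < L.length := by omega
  have hC : L.getD (i - 1) (leaf 0) ∈ L := by
    rw [List.getD_eq_getElem _ _ hk]
    exact List.getElem_mem hk
  have hmem := fun a => (hL _ hC).mem_iff (a := a)
  have hsucc := offset_succ hk
  rw [show i - 1 + 1 = i by omega] at hsucc
  ext x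
  simp only [piece, slot, leaves_shift, List.mem_toFinset, List.mem_map, hmem, List.mem_range'_1,
    Finset.mem_Icc]
  constructor
  · rintro ⟨y, hy, rfl⟩
    omega
  · intro hx
    exact ⟨x - offset L (i - 1), by omega, by omega⟩

theorem connected_piece {i : ℕ} (hi : i ∈ Set.Icc 1 L.length) : connected (piece L i) :=
  ⟨_, _, toFinset_leaves_piece hL hi⟩

theorem minLabel_piece {i : ℕ} (hi : i ∈ Set.Icc 1 L.length) :
    minLabel (piece L i) = offset L (i - 1) + 1 :=
  (minLabel_eq_of_toFinset_eq_Icc (toFinset_leaves_piece hL hi)).1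

theorem maxLabel_piece {i : ℕ} (hi : i ∈ Set.Icc 1 L.length) :
    maxLabel (piece L i) = offset L i :=
  (minLabel_eq_of_toFinset_eq_Icc (toFinset_leaves_piece hL hi)).2

theorem strictMonoOn_minLabel_piece :
    StrictMonoOn (fun i => minLabel (piece L i)) (Set.Icc 1 L.length) := fun i hi j hj hij => by
  have ⟨hi₁, hi₂⟩ := hi
  have ⟨hj₁, hj₂⟩ := hj
  simp only [minLabel_piece hL hi, minLabel_piece hL hj, add_lt_add_iff_right]
  exact offset_strictMonoOn (by simp only [Set.mem_Iic]; omega)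
    (by simp only [Set.mem_Iic]; omega) (by omega)

theorem strictMonoOn_maxLabel_piece :
    StrictMonoOn (fun i => maxLabel (piece L i)) (Set.Icc 1 L.length) := fun i hi j hj hij => by
  simp only [maxLabel_piece hL hi, maxLabel_piece hL hj]
  exact offset_strictMonoOn hi.2 hj.2 hij

theorem eq_of_isSubtree_piece {i j : ℕ} (hi : i ∈ Set.Icc 1 L.length)
    (hj : j ∈ Set.Icc 1 L.length) (h : IsSubtree (piece L j) (piece L i)) : j = i := by
  have hx := minLabel_mem (piece L j)
  refine eq_of_mem_slot (x := minLabel (piece L j)) hj hi ?_ ?_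
  · rw [← toFinset_leaves_piece hL hj]
    exact List.mem_toFinset.mpr hx
  · rw [← toFinset_leaves_piece hL hi]
    exact List.mem_toFinset.mpr (h.subset hx)

theorem toFinset_leaves_graft_piece {u : BTree} (hu : ∀ i ∈ leaves u, i ∈ Set.Icc 1 L.length) :
    (leaves (graft (piece L) u)).toFinset = (leaves u).toFinset.biUnion (slot L) := by
  ext x
  simp only [leaves_graft, List.mem_toFinset, List.mem_flatMap, Finset.mem_biUnion]
  refine exists_congr fun i => and_congr_right fun hi => ?_
  rw [← List.mem_toFinset, toFinset_leaves_piece hL (hu i hi)]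

theorem connected_graft_piece_iff {u : BTree} (hu : ∀ i ∈ leaves u, i ∈ Set.Icc 1 L.length) :
    connected (graft (piece L) u) ↔ connected u := by
  have hmin := hu _ (minLabel_mem u)
  have hmax := hu _ (maxLabel_mem u)
  constructor
  · rintro ⟨x, y, h⟩
    rw [toFinset_leaves_graft_piece hL hu] at h
    refine connected_iff.mpr (Finset.ext fun z => ⟨fun hz => ?_, fun hz => ?_⟩)
    · have hz' := List.mem_toFinset.mp hz
      exact Finset.mem_Icc.mpr ⟨minLabel_le hz', le_maxLabel hz'⟩
    · obtain ⟨hz₁, hz₂⟩ := Finset.mem_Icc.mp hz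
      exact mem_of_biUnion_slot_eq_Icc (fun i hi => hu i (List.mem_toFinset.mp hi)) h
        (List.mem_toFinset.mpr (minLabel_mem u)) (List.mem_toFinset.mpr (maxLabel_mem u)) hz₁ hz₂
  · intro h
    refine ⟨offset L (minLabel u - 1) + 1, offset L (maxLabel u), ?_⟩
    rw [toFinset_leaves_graft_piece hL hu, connected_iff.mp h,
      biUnion_slot hmin.1 (minLabel_le (maxLabel_mem u)) hmax.2]

end Pieces

section Tiling

theorem mem_Icc_of_perm_range' {l : List ℕ} {m : ℕ} (h : l.Perm (List.range' 1 m)) :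
    ∀ i ∈ l, i ∈ Set.Icc 1 m := fun i hi => by
  have := List.mem_range'_1.mp (h.subset hi)
  exact ⟨this.1, by omega⟩

theorem perm_range'_of_perm_append {l₁ l₂ : List ℕ} {a len : ℕ}
    (h : (l₁ ++ l₂).Perm (List.range' a len)) (h₁ : l₁.Perm (List.range' a l₁.length)) :
    l₂.Perm (List.range' (a + l₁.length) (len - l₁.length)) := by
  have hlen : l₁.length ≤ len := by
    have := h.length_eq
    simp only [List.length_append, List.length_range'] at this
    omega
  have hsplit := List.range'_append (s := a) (m := l₁.length) (n := len - l₁.length) (step := 1)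
  rw [one_mul, Nat.add_sub_cancel' hlen] at hsplit
  rw [← List.perm_append_left_iff (List.range' a l₁.length), hsplit]
  exact (h₁.symm.append_right l₂).trans h

theorem minLabel_head_of_perm_range' {B : BTree} {L : List BTree} {a len : ℕ}
    (hp : (B :: L).Pairwise (fun B B' => minLabel B < minLabel B'))
    (h : ((B :: L).flatMap leaves).Perm (List.range' a len)) : minLabel B = a := by
  have hmem : ∀ x, x ∈ (B :: L).flatMap leaves ↔ a ≤ x ∧ x < a + len := fun x => by
    rw [h.mem_iff, List.mem_range'_1]
  have hB := (hmem _).mp (List.mem_flatMap.mpr ⟨B, List.mem_cons_self, minLabel_mem B⟩)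
  obtain ⟨B', hB', ha⟩ := List.mem_flatMap.mp ((hmem a).mpr ⟨le_rfl, by omega⟩)
  have hBB' : minLabel B ≤ minLabel B' := by
    rcases List.mem_cons.mp hB' with rfl | hB'
    · exact le_rfl
    · exact (List.rel_of_pairwise_cons hp hB').le
  exact le_antisymm (hBB'.trans (minLabel_le ha)) hB.1

theorem minLabel_getD_of_perm_range' : ∀ {L : List BTree} {a len : ℕ},
    (∀ B ∈ L, connected B) → L.Pairwise (fun B B' => minLabel B < minLabel B') →
    (L.flatMap leaves).Perm (List.range' a len) →
    ∀ {k}, k < L.length → minLabel (L.getD k (leaf 0)) = a + offset L k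
  | [], _, _, _, _, _, _, hk => absurd hk (Nat.not_lt_zero _)
  | B :: L, a, len, _, hp, h, 0, _ => by
      simpa [offset] using minLabel_head_of_perm_range' hp h
  | B :: L, a, len, hc, hp, h, k + 1, hk => by
      rw [List.flatMap_cons] at h
      have hB := perm_range'_of_connected (hc B List.mem_cons_self)
        (List.nodup_append.mp (h.nodup_iff.mpr List.nodup_range')).1
      rw [minLabel_head_of_perm_range' hp (by rwa [List.flatMap_cons])] at hB
      rw [List.getD_cons_succ, minLabel_getD_of_perm_range'
        (fun B' hB' => hc B' (List.mem_cons_of_mem _ hB')) (List.pairwise_cons.mp hp).2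
        (perm_range'_of_perm_append h hB) (by simpa using hk)]
      simp only [offset, List.take_succ_cons, List.map_cons, List.sum_cons, numLeaves]
      omega

end Tiling

section Blocks

variable {l r : BTree}

def blocks (l r : BTree) : List BTree := maximalConnected l ++ maximalConnected r

theorem flatMap_leaves_blocks : (blocks l r).flatMap leaves = leaves (node l r) := by
  rw [blocks, List.flatMap_append, flatMap_leaves_maximalConnected,
    flatMap_leaves_maximalConnected, leaves]

theorem two_le_length_blocks : 2 ≤ (blocks l r).length := by
  have := List.length_pos_iff.mpr (maximalConnected_ne_nil l)
  have := List.length_pos_iff.mpr (maximalConnected_ne_nil r)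
  rw [blocks, List.length_append]
  omega

theorem mem_blocks {B : BTree} (hB : B ∈ blocks l r) :
    IsSubtree B (node l r) ∧ connected B ∧ B ≠ node l r := by
  rcases List.mem_append.mp hB with hB | hB
  · obtain ⟨hs, hc⟩ := isSubtree_and_connected_of_mem_maximalConnected hB
    exact ⟨.left hs, hc, fun h => not_isSubtree_node_left l r (h ▸ hs)⟩
  · obtain ⟨hs, hc⟩ := isSubtree_and_connected_of_mem_maximalConnected hB
    exact ⟨.right hs, hc, fun h => not_isSubtree_node_right l r (h ▸ hs)⟩

theorem exists_mem_blocks {s : BTree} (hs : IsSubtree s (node l r)) (hne : s ≠ node l r)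
    (hc : connected s) : ∃ B ∈ blocks l r, IsSubtree s B := by
  rcases hs with _ | hs | hs
  · exact absurd rfl hne
  · obtain ⟨B, hB, hsB⟩ := exists_mem_maximalConnected hs hc
    exact ⟨B, List.mem_append_left _ hB, hsB⟩
  · obtain ⟨B, hB, hsB⟩ := exists_mem_maximalConnected hs hc
    exact ⟨B, List.mem_append_right _ hB, hsB⟩

section Nodup

variable (hA : (leaves (node l r)).Nodup)
include hA

theorem pairwise_disjoint_blocks :
    (blocks l r).Pairwise (fun B B' => (leaves B).Disjoint (leaves B')) :=
  (List.nodup_flatMap.mp (flatMap_leaves_blocks ▸ hA)).2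

theorem eq_of_mem_blocks {B B' : BTree} (hB : B ∈ blocks l r) (hB' : B' ∈ blocks l r) {j : ℕ}
    (hj : j ∈ leaves B) (hj' : j ∈ leaves B') : B = B' := by
  by_contra hne
  have : Std.Symm (fun B B' : BTree => (leaves B).Disjoint (leaves B')) := ⟨fun _ _ h => h.symm⟩
  exact (pairwise_disjoint_blocks hA).forall hB hB' hne hj hj'

theorem eq_of_isSubtree_of_mem_blocks {B B' : BTree} (hB : B ∈ blocks l r)
    (hB' : B' ∈ blocks l r) (h : IsSubtree B B') : B = B' :=
  eq_of_mem_blocks hA hB hB' (minLabel_mem B) (h.subset (minLabel_mem B))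

theorem nodup_blocks : (blocks l r).Nodup :=
  (pairwise_disjoint_blocks hA).imp fun {B _} h he => by
    subst he
    exact h (minLabel_mem B) (minLabel_mem B)

end Nodup

def sortedBlocks (l r : BTree) : List BTree :=
  (blocks l r).mergeSort fun B B' => decide (minLabel B ≤ minLabel B')

theorem sortedBlocks_perm : (sortedBlocks l r).Perm (blocks l r) :=
  List.mergeSort_perm _ _

theorem sortedBlocks_pairwise (hA : (leaves (node l r)).Nodup) :
    (sortedBlocks l r).Pairwise (fun B B' => minLabel B < minLabel B') := by
  have hle : (sortedBlocks l r).Pairwise (fun B B' => minLabel B ≤ minLabel B') := by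
    refine (List.pairwise_mergeSort (fun a b c hab hbc => ?_) (fun a b => ?_) _).imp
      (of_decide_eq_true ·)
    · simp only [decide_eq_true_eq] at *
      omega
    · simp only [Bool.or_eq_true, decide_eq_true_eq]
      omega
  refine (hle.and (sortedBlocks_perm.nodup_iff.mpr (nodup_blocks hA))).imp_of_mem
    fun hB hB' ⟨hle, hne⟩ => lt_of_le_of_ne hle fun he => hne ?_
  exact eq_of_mem_blocks hA (sortedBlocks_perm.subset hB) (sortedBlocks_perm.subset hB')
    (minLabel_mem _) (he ▸ minLabel_mem _)

variable {n : ℕ}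

theorem perm_flatMap_leaves_sortedBlocks (hA : memL n (node l r)) :
    ((sortedBlocks l r).flatMap leaves).Perm (List.range' 1 n) :=
  (sortedBlocks_perm.flatMap_right leaves).trans (by rw [flatMap_leaves_blocks]; exact hA.1)

theorem minLabel_getD_sortedBlocks (hA : memL n (node l r)) {k : ℕ}
    (hk : k < (sortedBlocks l r).length) :
    minLabel ((sortedBlocks l r).getD k (leaf 0)) = 1 + offset (sortedBlocks l r) k :=
  minLabel_getD_of_perm_range' (fun _ hB => (mem_blocks (sortedBlocks_perm.subset hB)).2.1)
    (sortedBlocks_pairwise hA.nodup) (perm_flatMap_leaves_sortedBlocks hA) hk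

end Blocks

section Skeleton

variable {n : ℕ} {l r : BTree}

def normalizedBlocks (l r : BTree) : List BTree :=
  (sortedBlocks l r).map fun B => unshift (minLabel B - 1) B

theorem length_normalizedBlocks : (normalizedBlocks l r).length = (blocks l r).length := by
  rw [normalizedBlocks, List.length_map, sortedBlocks_perm.length_eq]

theorem map_numLeaves_normalizedBlocks :
    (normalizedBlocks l r).map numLeaves = (sortedBlocks l r).map numLeaves := by
  simp [normalizedBlocks, Function.comp_def, numLeaves_unshift]

theorem offset_normalizedBlocks (k : ℕ) :
    offset (normalizedBlocks l r) k = offset (sortedBlocks l r) k := by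
  rw [offset, offset, List.map_take, List.map_take, map_numLeaves_normalizedBlocks]

theorem memL_normalizedBlocks (hA : memL n (node l r)) :
    ∀ C ∈ normalizedBlocks l r, memL (numLeaves C) C := by
  intro C hC
  obtain ⟨B, hB, rfl⟩ := List.mem_map.mp hC
  obtain ⟨hsub, hc, -⟩ := mem_blocks (sortedBlocks_perm.subset hB)
  have hpos : 1 ≤ minLabel B := (mem_Icc_of_perm_range' hA.1 _ (hsub.subset (minLabel_mem B))).1
  refine ⟨?_, valid_of_valid_shift (s := minLabel B - 1) ?_⟩
  · rw [leaves_unshift, numLeaves_unshift]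
    have := (perm_range'_of_connected hc (hA.nodup.sublist hsub.sublist)).map (· - (minLabel B - 1))
    rwa [List.map_sub_range' (by omega), show minLabel B - (minLabel B - 1) = 1 by omega] at this
  · rw [shift_unshift _ fun i hi => (Nat.sub_le _ _).trans (minLabel_le hi)]
    exact hsub.valid hA.2

theorem sum_numLeaves_normalizedBlocks (hA : memL n (node l r)) :
    ((normalizedBlocks l r).map numLeaves).sum = n := by
  have := (perm_flatMap_leaves_sortedBlocks hA).length_eq
  rw [List.length_flatMap, List.length_range'] at this
  rwa [map_numLeaves_normalizedBlocks]

theorem piece_normalizedBlocks (hA : memL n (node l r)) {k : ℕ}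
    (hk : k < (sortedBlocks l r).length) :
    piece (normalizedBlocks l r) (k + 1) = (sortedBlocks l r).getD k (leaf 0) := by
  have hmin := minLabel_getD_sortedBlocks hA hk
  rw [piece, Nat.add_sub_cancel, offset_normalizedBlocks, normalizedBlocks,
    List.getD_eq_getElem _ _ (by simpa using hk), List.getElem_map,
    ← List.getD_eq_getElem _ (leaf 0) hk, hmin, Nat.add_sub_cancel_left]
  exact shift_unshift _ fun i hi => by have := minLabel_le hi; omega

theorem piece_normalizedBlocks_mem_blocks (hA : memL n (node l r)) {i : ℕ}
    (hi : i ∈ Set.Icc 1 (normalizedBlocks l r).length) :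
    piece (normalizedBlocks l r) i ∈ blocks l r := by
  have hk : i - 1 < (sortedBlocks l r).length := by
    have := hi.1
    have := hi.2
    rw [normalizedBlocks, List.length_map] at this
    omega
  rw [show i = i - 1 + 1 by have := hi.1; omega, piece_normalizedBlocks hA hk,
    List.getD_eq_getElem _ _ hk]
  exact sortedBlocks_perm.subset (List.getElem_mem hk)

def blockRank (l r : BTree) (B : BTree) : ℕ := (sortedBlocks l r).idxOf B + 1

def skeleton (l r : BTree) : BTree :=
  node (contract (blockRank l r) l) (contract (blockRank l r) r)

theorem perm_leaves_skeleton (hA : (leaves (node l r)).Nodup) :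
    (leaves (skeleton l r)).Perm (List.range' 1 (normalizedBlocks l r).length) := by
  have hleaves : leaves (skeleton l r) = (blocks l r).map (blockRank l r) := by
    simp only [skeleton, leaves, leaves_contract, blocks, List.map_append]
  rw [hleaves, normalizedBlocks, List.length_map]
  refine (sortedBlocks_perm.map _).symm.trans (List.Perm.of_eq ?_)
  refine List.ext_getElem (by simp) fun k h₁ _ => ?_
  rw [List.getElem_map, List.getElem_range', blockRank,
    (sortedBlocks_perm.nodup_iff.mpr (nodup_blocks hA)).idxOf_getElem _ (by simpa using h₁)]
  omega

theorem graft_piece_skeleton (hA : memL n (node l r)) :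
    graft (piece (normalizedBlocks l r)) (skeleton l r) = node l r := by
  have hf : ∀ B ∈ blocks l r, piece (normalizedBlocks l r) (blockRank l r B) = B := fun B hB => by
    have hk := List.idxOf_lt_length_iff.mpr (sortedBlocks_perm.mem_iff.mpr hB)
    rw [blockRank, piece_normalizedBlocks hA hk, List.getD_eq_getElem _ _ hk, List.getElem_idxOf]
  rw [skeleton, graft, graft_contract _ _ l fun B hB => hf B (List.mem_append_left _ hB),
    graft_contract _ _ r fun B hB => hf B (List.mem_append_right _ hB)]

theorem valid_skeleton (hA : memL n (node l r)) : valid (skeleton l r) := by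
  have hN C hC := (memL_normalizedBlocks hA C hC).1
  refine valid_of_valid_graft (strictMonoOn_minLabel_piece hN) (strictMonoOn_maxLabel_piece hN)
    (mem_Icc_of_perm_range' (perm_leaves_skeleton hA.nodup)) ?_
  rw [graft_piece_skeleton hA]
  exact hA.2

theorem not_connected_of_isSubtree_skeleton (hA : memL n (node l r)) {s s₁ s₂ : BTree}
    (hs : IsSubtree s (skeleton l r)) (hnode : s = node s₁ s₂) (hne : s ≠ skeleton l r) :
    ¬ connected s := by
  intro hc
  subst hnode
  set N := normalizedBlocks l r
  have hN C hC := (memL_normalizedBlocks hA C hC).1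
  have hperm := perm_leaves_skeleton hA.nodup
  have hS := mem_Icc_of_perm_range' hperm
  have hSs : ∀ i ∈ leaves (node s₁ s₂), i ∈ Set.Icc 1 N.length := fun i hi => hS i (hs.subset hi)
  have hnodup := hperm.nodup_iff.mpr List.nodup_range'
  have hsub : IsSubtree (graft (piece N) (node s₁ s₂)) (node l r) :=
    graft_piece_skeleton hA ▸ hs.graft _
  have hgne : graft (piece N) (node s₁ s₂) ≠ node l r := fun he =>
    hne (graft_injOn (fun i hi j hj => eq_of_isSubtree_piece hN hi hj) (hnodup.sublist hs.sublist)
      hnodup hSs hS (he.trans (graft_piece_skeleton hA).symm))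
  obtain ⟨B, hB, hsB⟩ := exists_mem_blocks hsub hgne ((connected_graft_piece_iff hN hSs).mpr hc)
  have hpiece : ∀ i ∈ leaves (node s₁ s₂), piece N i = B := fun i hi =>
    eq_of_isSubtree_of_mem_blocks hA.nodup (piece_normalizedBlocks_mem_blocks hA (hSs i hi)) hB
      ((isSubtree_graft _ hi).trans hsB)
  obtain ⟨i, hi⟩ := List.exists_mem_of_ne_nil _ (leaves_ne_nil s₁)
  obtain ⟨j, hj⟩ := List.exists_mem_of_ne_nil _ (leaves_ne_nil s₂)
  have hi' := List.mem_append_left (leaves s₂) hi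
  have hj' := List.mem_append_right (leaves s₁) hj
  have hji : j = i := eq_of_isSubtree_piece hN (hSs i hi') (hSs j hj')
    (by rw [hpiece i hi', hpiece j hj']; exact .refl B)
  exact List.disjoint_of_nodup_append (hnodup.sublist hs.sublist) hi (hji ▸ hj)

theorem memP_skeleton (hA : memL n (node l r)) :
    memP (normalizedBlocks l r).length (skeleton l r) :=
  ⟨⟨perm_leaves_skeleton hA.nodup, valid_skeleton hA⟩,
    fun _ _ _ hs hnode hne => not_connected_of_isSubtree_skeleton hA hs hnode hne⟩

end Skeleton

def IsPrimeDecomposition (n : ℕ) (A p : BTree) (Bs : List BTree) : Prop :=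
  2 ≤ Bs.length ∧ memP Bs.length p ∧ (∀ B ∈ Bs, memL (numLeaves B) B) ∧
    (Bs.map numLeaves).sum = n ∧ A = substitute p Bs

theorem isPrimeDecomposition_skeleton {n : ℕ} {l r : BTree} (hA : memL n (node l r)) :
    IsPrimeDecomposition n (node l r) (skeleton l r) (normalizedBlocks l r) :=
  ⟨length_normalizedBlocks ▸ two_le_length_blocks, memP_skeleton hA, memL_normalizedBlocks hA,
    sum_numLeaves_normalizedBlocks hA, (graft_piece_skeleton hA).symm⟩

namespace IsPrimeDecomposition

variable {n : ℕ} {l r q : BTree} {Cs : List BTree} (h : IsPrimeDecomposition n (node l r) q Cs)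
include h

theorem normalized : ∀ C ∈ Cs, (leaves C).Perm (List.range' 1 (numLeaves C)) :=
  fun C hC => (h.2.2.1 C hC).1

theorem mem_Icc : ∀ i ∈ leaves q, i ∈ Set.Icc 1 Cs.length :=
  mem_Icc_of_perm_range' h.2.1.1.1

theorem eq_graft : node l r = graft (piece Cs) q :=
  h.2.2.2.2.trans (substitute_eq_graft q Cs)

theorem piece_isSubtree {i : ℕ} (hi : i ∈ Set.Icc 1 Cs.length) :
    IsSubtree (piece Cs i) (node l r) := by
  have ⟨hi₁, hi₂⟩ := hi
  rw [h.eq_graft]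
  exact isSubtree_graft _ (h.2.1.1.1.mem_iff.mpr (List.mem_range'_1.mpr ⟨hi₁, by omega⟩))

theorem piece_ne {i : ℕ} (hi : i ∈ Set.Icc 1 Cs.length) : piece Cs i ≠ node l r := by
  have hm := h.1
  obtain ⟨j, hj, hji⟩ : ∃ j ∈ Set.Icc 1 Cs.length, j ≠ i :=
    ⟨if i = 1 then 2 else 1, by split_ifs <;> constructor <;> omega, by split_ifs <;> omega⟩
  intro he
  exact hji (eq_of_isSubtree_piece h.normalized hi hj (he ▸ h.piece_isSubtree hj))

theorem exists_isSubtree_piece {B : BTree} (hB : B ∈ blocks l r) :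
    ∃ i ∈ Set.Icc 1 Cs.length, IsSubtree B (piece Cs i) := by
  obtain ⟨hsub, hc, hne⟩ := mem_blocks hB
  rw [h.eq_graft] at hsub hne
  rcases exists_of_isSubtree_graft hsub with ⟨i, hi, hBi⟩ | ⟨u, v, huv, rfl⟩
  · exact ⟨i, h.mem_Icc i hi, hBi⟩
  · have hu : ∀ i ∈ leaves (node u v), i ∈ Set.Icc 1 Cs.length := fun i hi =>
      h.mem_Icc i (huv.subset hi)
    have hq : node u v = q := by_contra fun hq =>
      h.2.1.2 _ u v huv rfl hq ((connected_graft_piece_iff h.normalized hu).mp hc)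
    exact absurd (congrArg (graft (piece Cs)) hq) hne

theorem piece_mem_blocks {i : ℕ} (hi : i ∈ Set.Icc 1 Cs.length) : piece Cs i ∈ blocks l r := by
  obtain ⟨B, hB, hiB⟩ :=
    exists_mem_blocks (h.piece_isSubtree hi) (h.piece_ne hi) (connected_piece h.normalized hi)
  obtain ⟨j, hj, hBj⟩ := h.exists_isSubtree_piece hB
  obtain rfl := eq_of_isSubtree_piece h.normalized hj hi (hiB.trans hBj)
  rwa [hiB.antisymm hBj]

theorem map_piece_range_eq_sortedBlocks (hA : (leaves (node l r)).Nodup) :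
    (List.range Cs.length).map (fun k => piece Cs (k + 1)) = sortedBlocks l r := by
  have hpair : ((List.range Cs.length).map fun k => piece Cs (k + 1)).Pairwise
      (fun B B' => minLabel B < minLabel B') := by
    refine List.pairwise_map.mpr (List.pairwise_lt_range.imp_of_mem fun {a b} ha hb hab => ?_)
    rw [List.mem_range] at ha hb
    rw [minLabel_piece h.normalized ⟨by omega, by omega⟩,
      minLabel_piece h.normalized ⟨by omega, by omega⟩, Nat.add_sub_cancel, Nat.add_sub_cancel,
      add_lt_add_iff_right]
    exact offset_strictMonoOn (Set.mem_Iic.mpr ha.le) (Set.mem_Iic.mpr hb.le) hab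
  have hmem : ∀ B, B ∈ (List.range Cs.length).map (fun k => piece Cs (k + 1)) ↔
      B ∈ sortedBlocks l r := fun B => by
    rw [List.mem_map, sortedBlocks_perm.mem_iff]
    constructor
    · rintro ⟨k, hk, rfl⟩
      rw [List.mem_range] at hk
      exact h.piece_mem_blocks ⟨by omega, by omega⟩
    · intro hB
      obtain ⟨i, hi, hBi⟩ := h.exists_isSubtree_piece hB
      have ⟨hi₁, hi₂⟩ := hi
      refine ⟨i - 1, List.mem_range.mpr (by omega), ?_⟩
      rw [Nat.sub_add_cancel hi₁]
      exact (eq_of_isSubtree_of_mem_blocks hA hB (h.piece_mem_blocks hi) hBi).symm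
  exact List.Perm.eq_of_pairwise (fun _ _ _ _ h₁ h₂ => absurd h₂ (lt_asymm h₁)) hpair
    (sortedBlocks_pairwise hA) ((List.perm_ext_iff_of_nodup (hpair.imp fun h => ne_of_apply_ne minLabel h.ne)
      (sortedBlocks_perm.nodup_iff.mpr (nodup_blocks hA))).mpr hmem)

theorem eq_normalizedBlocks (hA : (leaves (node l r)).Nodup) : Cs = normalizedBlocks l r := by
  rw [normalizedBlocks, ← h.map_piece_range_eq_sortedBlocks hA, List.map_map]
  refine List.ext_getElem (by simp) fun k _ h₂ => ?_
  have hk : k < Cs.length := by simpa using h₂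
  simp only [List.getElem_map, List.getElem_range, Function.comp_apply]
  rw [minLabel_piece h.normalized ⟨by omega, by omega⟩, piece, Nat.add_sub_cancel,
    Nat.add_sub_cancel, unshift_shift, List.getD_eq_getElem _ _ hk]

theorem eq_skeleton (hA : memL n (node l r)) : q = skeleton l r ∧ Cs = normalizedBlocks l r := by
  have hCs := h.eq_normalizedBlocks hA.nodup
  have hperm := perm_leaves_skeleton hA.nodup
  refine ⟨graft_injOn (fun i hi j hj => eq_of_isSubtree_piece h.normalized hi hj)
    (h.2.1.1.1.nodup_iff.mpr List.nodup_range') (hperm.nodup_iff.mpr List.nodup_range')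
    h.mem_Icc (by rw [hCs]; exact mem_Icc_of_perm_range' hperm) ?_, hCs⟩
  rw [← h.eq_graft, hCs, graft_piece_skeleton hA]

end IsPrimeDecomposition

end BTree

/-- Every `A ∈ L(n)` with `n ≥ 2` can be written in exactly one way as a
substitution `A = p(B_1, …, B_m)` with `m ≥ 2`, `p ∈ P(m)` prime, and each
`B_i ∈ L(n_i)` where `n_1 + ⋯ + n_m = n`. -/
theorem existsUnique_prime_decomposition (n : ℕ) (hn : 2 ≤ n)
    (A : BTree) (hA : BTree.memL n A) :
    ∃! pB : BTree × List BTree,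
      2 ≤ pB.2.length ∧
      BTree.memP pB.2.length pB.1 ∧
      (∀ B ∈ pB.2, BTree.memL (BTree.numLeaves B) B) ∧
      (pB.2.map BTree.numLeaves).sum = n ∧
      A = BTree.substitute pB.1 pB.2 := by
  cases A with
  | leaf _ =>
      have := hA.1.length_eq
      simp only [BTree.leaves, List.length_singleton, List.length_range'] at this
      omega
  | node l r =>
      refine ⟨(BTree.skeleton l r, BTree.normalizedBlocks l r),
        BTree.isPrimeDecomposition_skeleton hA, ?_⟩
      rintro ⟨q, Cs⟩ h
      obtain ⟨rfl, rfl⟩ := BTree.IsPrimeDecomposition.eq_skeleton h hA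
      rfl
end

section
/- Let F(X) = Σ_{n≥1} (n-1)!·X^n ∈ ℚ[[X]] with compositional inverse F^{<−1>}, and let A(X) = Σ_{n≥0} a_n·X^n where a_n is the number of stabilized-interval-free permutations of {1,…,n} (with a_0 = 1). Then A(X)·F^{<−1>}(X) = X in ℚ[[X]]; equivalently, A(X) = −X/B(X) where B = −F^{<−1>}. -/
/-- The generating series `F(X) = Σ_{n≥1} (n-1)!·X^n ∈ ℚ[[X]]`. -/
noncomputable def F : PowerSeries ℚ :=
  PowerSeries.mk fun n => if n = 0 then 0 else ((n - 1).factorial : ℚ)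

/-- `G` is the compositional inverse `F^{<-1>}` of `F`: it has zero constant
term and `F(G(X)) = X`.  Since `G` has zero constant coefficient, the
coefficient of `X^n` in `F(G(X)) = Σ_{m≥1} (m-1)!·G^m` is the finite sum
`Σ_{m=1}^{n} (m-1)!·[X^n]G^m`, so the equation `F(G(X)) = X` is expressed
coefficientwise by the finite sums below. -/
def IsCompInvOfF (G : PowerSeries ℚ) : Prop :=
  PowerSeries.constantCoeff G = 0 ∧
    ∀ n : ℕ,
      ∑ m ∈ Finset.Icc 1 n, ((m - 1).factorial : ℚ) * PowerSeries.coeff n (G ^ m) =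
        PowerSeries.coeff n (PowerSeries.X : PowerSeries ℚ)

/-- A permutation `σ` of `{1,…,n}` (modeled as `Fin n`) is
stabilized-interval-free (SIF) if it stabilizes no proper nonempty
subinterval: there are no `i ≤ j` with `{i,…,j} ≠ [n]` and
`σ({i,…,j}) = {i,…,j}`. -/
def SIF {n : ℕ} (σ : Equiv.Perm (Fin n)) : Prop :=
  ∀ i j : Fin n, i ≤ j → Finset.Icc i j ≠ Finset.univ →
    Finset.image σ (Finset.Icc i j) ≠ Finset.Icc i j

/-- `a_n`, the number of SIF permutations of `{1,…,n}` (with `a_0 = 1`). -/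
noncomputable def sifCount (n : ℕ) : ℕ := Nat.card {σ : Equiv.Perm (Fin n) // SIF σ}

/-- The generating series `A(X) = Σ_{n≥0} a_n·X^n` of SIF permutations. -/
noncomputable def A : PowerSeries ℚ := PowerSeries.mk fun n => (sifCount n : ℚ)

/-!
Since `F(G) = X`, it suffices to show `F = X·A(F)`, i.e. `n! = Σ_k a_k·[Xⁿ]F^k`: substituting `G`
then gives `X = G·A(F(G)) = G·A`.

To prove the identity, call a point of a permutation `π` of `{0,…,n-1}` a core point if it lies in
no `π`-stable interval avoiding `0`. The core points `C` (which include `0`) cut `{0,…,n-1}` into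
blocks, each starting at a core point. Then `π` maps `C` and the rest of each block to themselves,
acting on `C`, read in increasing order, as an SIF permutation; conversely every permutation of this
shape has core `C`. Hence `n! = Σ_C a_{|C|}·∏ (ℓ - 1)!` over the block lengths `ℓ`, and grouping
the sets `C` by their size `k` yields `[Xⁿ]F^k`, since `F = Σ_ℓ (ℓ - 1)!·X^ℓ`.
-/

open PowerSeries Finset Equiv

namespace PowerSeries

variable {R : Type*} [CommRing R]

theorem coeff_pow_eq_zero_of_lt {f : R⟦X⟧} (hf : constantCoeff f = 0) {n m : ℕ} (h : n < m) :
    coeff n (f ^ m) = 0 :=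
  coeff_of_lt_order _ ((Nat.cast_lt.mpr h).trans_le (le_order_pow_of_constantCoeff_eq_zero m hf))

theorem coeff_subst_eq_sum {g : R⟦X⟧} (hg : constantCoeff g = 0) (f : R⟦X⟧) (n : ℕ) :
    coeff n (f.subst g) = ∑ m ∈ range (n + 1), coeff m f * coeff n (g ^ m) := by
  rw [coeff_subst' (.of_constantCoeff_zero' hg)]
  refine finsum_eq_sum_of_support_subset _ fun m hm => ?_
  by_contra h
  simp_all [coeff_pow_eq_zero_of_lt hg (show n < m by simpa using h)]

end PowerSeries

theorem Finset.eq_Icc_min'_max'_of_ordConnected {α : Type*} [LinearOrder α]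
    [LocallyFiniteOrder α] {s : Finset α} (hs : s.Nonempty) (h : (s : Set α).OrdConnected) :
    s = Icc (s.min' hs) (s.max' hs) := by
  ext x
  exact ⟨fun hx => mem_Icc.mpr ⟨s.min'_le x hx, s.le_max' x hx⟩,
    fun hx => h.out (s.min'_mem hs) (s.max'_mem hs) (mem_Icc.mp hx)⟩

theorem Finset.image_perm_eq_self_iff {α : Type*} [DecidableEq α] {σ : Perm α} {s : Finset α} :
    s.image σ = s ↔ ∀ x, σ x ∈ s ↔ x ∈ s := by
  refine ⟨fun h x => ?_, fun h => ?_⟩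
  · conv_lhs => rw [← h]
    exact σ.injective.mem_finset_image
  · ext y
    simp only [mem_image]
    exact ⟨fun ⟨x, hx, hxy⟩ => hxy ▸ (h x).mpr hx,
      fun hy => ⟨σ.symm y, (h _).mp (by simpa using hy), σ.apply_symm_apply y⟩⟩

theorem Set.OrdConnected.isLowerSet_of_isBot {α : Type*} [Preorder α] {s : Set α}
    (hs : s.OrdConnected) {a : α} (ha : IsBot a) (has : a ∈ s) : IsLowerSet s :=
  fun _ c hcb hb => hs.out has hb ⟨ha c, hcb⟩

def Equiv.Perm.fiberwiseEquiv {α ι : Type*} (f : α → ι) :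
    {π : Perm α // f ∘ π = f} ≃ ((i : ι) → Perm {a // f a = i}) :=
  (subtypeEquiv DomMulAct.mk fun _ => DomMulAct.mem_stabilizer_iff.symm).trans
    (MulOpposite.opEquiv.trans (DomMulAct.stabilizerMulEquiv f).toEquiv)

theorem Equiv.Perm.fiberwiseEquiv_apply {α ι : Type*} {f : α → ι}
    (π : {π : Perm α // f ∘ π = f}) (i : ι) (a : {a // f a = i}) :
    (fiberwiseEquiv f π i a : α) = π.1 a :=
  rfl

theorem constantCoeff_F : constantCoeff F = 0 := by
  simp [F, ← coeff_zero_eq_constantCoeff_apply]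

theorem coeff_succ_F (n : ℕ) : coeff (n + 1) F = n.factorial := by
  simp [F]

theorem IsCompInvOfF.subst_F {G : ℚ⟦X⟧} (hG : IsCompInvOfF G) : F.subst G = X := by
  ext n
  rw [coeff_subst_eq_sum hG.1, ← hG.2 n, sum_range_succ', coeff_zero_eq_constantCoeff,
    constantCoeff_F, zero_mul, add_zero, range_eq_Ico,
    sum_Ico_add' (fun m => coeff m F * coeff n (G ^ m)), zero_add, Ico_add_one_right_eq_Icc]
  refine sum_congr rfl fun m hm => ?_
  obtain ⟨k, rfl⟩ := Nat.exists_eq_add_of_le' (mem_Icc.mp hm).1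
  rw [coeff_succ_F, Nat.add_sub_cancel]

theorem coeff_F_pow_succ (n k : ℕ) :
    coeff n (F ^ (k + 1)) = ∑ c ∈ range n, ((n - c - 1).factorial : ℚ) * coeff c (F ^ k) := by
  rw [pow_succ, coeff_mul, Nat.sum_antidiagonal_eq_sum_range_succ_mk, sum_range_succ,
    Nat.sub_self, coeff_zero_eq_constantCoeff_apply, constantCoeff_F, mul_zero, add_zero]
  refine sum_congr rfl fun c hc => ?_
  rw [show n - c = n - c - 1 + 1 by have := mem_range.mp hc; omega, coeff_succ_F,
    Nat.add_sub_cancel, mul_comm]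

def nextAbove (n : ℕ) (D : Finset ℕ) (c : ℕ) : ℕ :=
  (insert n (D.filter (c < ·))).min' (insert_nonempty _ _)

theorem lt_nextAbove_iff {n c m : ℕ} {D : Finset ℕ} :
    m < nextAbove n D c ↔ m < n ∧ ∀ d ∈ D, c < d → m < d := by
  simp [nextAbove, lt_min'_iff]

theorem nextAbove_of_forall_le {n c : ℕ} {D : Finset ℕ} (h : ∀ d ∈ D, d ≤ c) :
    nextAbove n D c = n :=
  eq_of_forall_lt_iff fun m => by
    simp only [lt_nextAbove_iff, and_iff_left_iff_imp]
    exact fun _ d hd hcd => absurd (h d hd) (not_le.mpr hcd)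

theorem nextAbove_insert {n c d : ℕ} {D : Finset ℕ} (hcn : c < n) (hdc : d < c) :
    nextAbove n (insert c D) d = nextAbove c D d :=
  eq_of_forall_lt_iff fun m => by
    simp only [lt_nextAbove_iff, forall_mem_insert, hdc, true_implies]
    exact ⟨fun h => ⟨h.2.1, h.2.2⟩, fun h => ⟨h.1.trans hcn, h⟩⟩

/-- `∏ (ℓ - 1)!` over the lengths `ℓ` of the blocks into which `D` cuts `[min D, n)`. -/
def gapWeight (n : ℕ) (D : Finset ℕ) : ℕ :=
  ∏ c ∈ D, (nextAbove n D c - c - 1).factorial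

theorem gapWeight_insert {n c : ℕ} {D : Finset ℕ} (hcn : c < n) (hD : ∀ d ∈ D, d < c) :
    gapWeight n (insert c D) = (n - c - 1).factorial * gapWeight c D := by
  rw [gapWeight, prod_insert fun h => lt_irrefl c (hD c h),
    nextAbove_of_forall_le (forall_mem_insert .. |>.mpr ⟨le_rfl, fun d hd => (hD d hd).le⟩)]
  congr 1
  exact prod_congr rfl fun d hd => by rw [nextAbove_insert hcn (hD d hd)]

def powersetCardWithZero (n k : ℕ) : Finset (Finset ℕ) :=
  ((range n).powersetCard k).filter (fun D => 0 < n → 0 ∈ D)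

theorem mem_powersetCardWithZero {n k : ℕ} {D : Finset ℕ} :
    D ∈ powersetCardWithZero n k ↔ D ⊆ range n ∧ D.card = k ∧ (0 < n → 0 ∈ D) := by
  simp [powersetCardWithZero, mem_powersetCard, and_assoc]

theorem sum_powersetCardWithZero_succ {M : Type*} [AddCommMonoid M] (n k : ℕ)
    (f : Finset ℕ → M) : ∑ D ∈ powersetCardWithZero n (k + 1), f D =
      ∑ c ∈ range n, ∑ D ∈ powersetCardWithZero c k, f (insert c D) := by
  have hmax : ∀ D ∈ powersetCardWithZero n (k + 1),
      D.sup id ∈ D ∧ D.sup id < n ∧ ∀ d ∈ D.erase (D.sup id), d < D.sup id := by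
    intro D hD
    obtain ⟨hDn, hcard, -⟩ := mem_powersetCardWithZero.mp hD
    have hmem : D.sup id ∈ D := by
      simpa using sup_mem_of_nonempty (f := id) (card_pos.mp (by omega))
    exact ⟨hmem, mem_range.mp (hDn hmem), fun d hd =>
      lt_of_le_of_ne (le_sup (f := id) (mem_of_mem_erase hd)) (ne_of_mem_erase hd)⟩
  rw [sum_sigma']
  refine sum_nbij' (fun D => ⟨D.sup id, D.erase (D.sup id)⟩) (fun p => insert p.1 p.2)
    ?_ ?_ ?_ ?_ ?_
  · intro D hD
    obtain ⟨hmem, hlt, herase⟩ := hmax D hD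
    obtain ⟨-, hcard, h0⟩ := mem_powersetCardWithZero.mp hD
    simp only [mem_sigma, mem_range, mem_powersetCardWithZero]
    refine ⟨hlt, fun d hd => mem_range.mpr (herase d hd),
      by rw [card_erase_of_mem hmem, hcard]; rfl,
      fun hpos => mem_erase.mpr ⟨hpos.ne, h0 (by omega)⟩⟩
  · rintro ⟨c, D⟩ h
    simp only [mem_sigma, mem_range, mem_powersetCardWithZero] at h ⊢
    obtain ⟨hcn, hDc, hcard, h0⟩ := h
    have hcD : c ∉ D := fun h => lt_irrefl c (mem_range.mp (hDc h))
    refine ⟨insert_subset (mem_range.mpr hcn) (hDc.trans (range_subset_range.mpr hcn.le)),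
      by rw [card_insert_of_notMem hcD, hcard], fun _ => ?_⟩
    rcases c.eq_zero_or_pos with rfl | hc
    · exact mem_insert_self _ _
    · exact mem_insert_of_mem (h0 hc)
  · intro D hD
    exact insert_erase (hmax D hD).1
  · rintro ⟨c, D⟩ h
    obtain ⟨hDc, -⟩ := mem_powersetCardWithZero.mp (mem_sigma.mp h).2
    have hcD : c ∉ D := fun h => lt_irrefl c (mem_range.mp (hDc h))
    have hsup : (insert c D).sup id = c := by
      simpa using fun d hd => (mem_range.mp (hDc hd)).le
    simp only [hsup, erase_insert hcD]
  · intro D hD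
    rw [insert_erase (hmax D hD).1]

theorem coeff_F_pow (k n : ℕ) :
    coeff n (F ^ k) = ∑ D ∈ powersetCardWithZero n k, (gapWeight n D : ℚ) := by
  induction k generalizing n with
  | zero =>
    rcases n.eq_zero_or_pos with rfl | hn
    · simp [powersetCardWithZero, gapWeight]
    · simp [powersetCardWithZero, coeff_one, hn.ne', filter_singleton, hn]
  | succ k ih =>
    simp_rw [coeff_F_pow_succ, ih, mul_sum, sum_powersetCardWithZero_succ]
    refine sum_congr rfl fun c hc => sum_congr rfl fun D hD => ?_
    rw [gapWeight_insert (mem_range.mp hc) fun d hd =>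
      mem_range.mp ((mem_powersetCardWithZero.mp hD).1 hd)]
    push_cast
    rfl

/-- A stable initial segment `[0, j]` with `j` not the top has the stable complement `(j, k)`,
which is not an initial segment. -/
theorem sif_iff_isLowerSet {k : ℕ} {σ : Perm (Fin k)} :
    SIF σ ↔ ∀ T : Finset (Fin k), (T : Set (Fin k)).OrdConnected →
      (∀ l, σ l ∈ T ↔ l ∈ T) → IsLowerSet (T : Set (Fin k)) := by
  constructor
  · intro hσ T hT hstab a b hba ha
    have hne : T.Nonempty := ⟨a, ha⟩
    suffices T = univ by simp [this]
    by_contra hT'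
    rw [eq_Icc_min'_max'_of_ordConnected hne hT] at hT' hstab
    exact hσ _ _ (T.min'_le _ (T.max'_mem hne)) hT' (image_perm_eq_self_iff.mpr hstab)
  · intro H i j hij hne himg
    have hstab := image_perm_eq_self_iff.mp himg
    have hlow := H _ (by simpa using Set.ordConnected_Icc) hstab
    have hcompl : ∀ l, l ∈ Ioi j ↔ l ∉ Icc i j := fun l => by
      refine ⟨fun hl hl' => (mem_Ioi.mp hl).not_ge (mem_Icc.mp hl').2, fun hl => ?_⟩
      exact mem_Ioi.mpr (lt_of_not_ge fun hlj => hl (hlow hlj (by simp [hij])))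
    obtain ⟨t, -, ht⟩ := exists_of_ssubset (ssubset_univ_iff.mpr hne)
    have := H (Ioi j) (by simpa using Set.ordConnected_Ioi) (fun l => by simp only [hcompl, hstab])
      ((mem_Ioi.mp ((hcompl t).mpr ht)).le) ((hcompl t).mpr ht)
    simp at this

namespace SIF

variable {n : ℕ} [NeZero n] {C : Finset (Fin n)} {π : Perm (Fin n)} {x y c : Fin n}

/-- `0` when no element of `C` lies below `x`. -/
noncomputable def anchor (C : Finset (Fin n)) (x : Fin n) : Fin n := (C.filter (· ≤ x)).sup id

theorem anchor_le : anchor C x ≤ x :=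
  Finset.sup_le fun _ hc => (mem_filter.mp hc).2

theorem le_anchor (hc : c ∈ C) (hcx : c ≤ x) : c ≤ anchor C x :=
  le_sup (f := id) (mem_filter.mpr ⟨hc, hcx⟩)

theorem anchor_mem (h0 : 0 ∈ C) (x : Fin n) : anchor C x ∈ C := by
  have hne : (C.filter (· ≤ x)).Nonempty := ⟨0, mem_filter.mpr ⟨h0, Fin.zero_le x⟩⟩
  obtain ⟨c, hc, hcx⟩ := sup_mem_of_nonempty (f := id) hne
  rw [anchor, ← hcx]
  exact (mem_filter.mp hc).1

theorem anchor_eq_self (hx : x ∈ C) : anchor C x = x :=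
  anchor_le.antisymm (le_anchor hx le_rfl)

theorem anchor_mono : Monotone (anchor C) :=
  fun _ _ hxy => sup_mono fun _ hc =>
    mem_filter.mpr ⟨(mem_filter.mp hc).1, (mem_filter.mp hc).2.trans hxy⟩

theorem anchor_eq_of_ordConnected {S : Finset (Fin n)} (h0 : 0 ∈ C)
    (hS : (S : Set (Fin n)).OrdConnected) (hSC : ∀ z ∈ S, z ∉ C) (hx : x ∈ S) (hy : y ∈ S) :
    anchor C x = anchor C y := by
  wlog hxy : x ≤ y generalizing x y
  · exact (this hy hx (le_of_not_ge hxy)).symm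
  refine (anchor_mono hxy).antisymm (le_anchor (anchor_mem h0 y) (le_of_not_gt fun hlt => ?_))
  exact hSC _ (hS.out hx hy ⟨hlt.le, anchor_le⟩) (anchor_mem h0 y)

/-- The fibres of `block C` are `C` and the gaps following the points of `C`. -/
noncomputable def block (C : Finset (Fin n)) (x : Fin n) : Option (Fin n) :=
  if x ∈ C then none else some (anchor C x)

theorem block_eq_none_iff : block C x = none ↔ x ∈ C := by
  unfold block; split_ifs with hx <;> simp [hx]

theorem block_eq_some_iff (h0 : 0 ∈ C) :
    block C x = some c ↔ c ∈ C ∧ c < x ∧ ∀ d ∈ C, c < d → x < d := by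
  unfold block
  split_ifs with hx
  · simp only [false_iff, not_and, not_forall, not_lt]
    exact fun _ hcx => ⟨x, hx, hcx, le_rfl⟩
  · simp only [Option.some.injEq]
    constructor
    · rintro rfl
      refine ⟨anchor_mem h0 x, anchor_le.lt_of_ne fun h => hx (h ▸ anchor_mem h0 x),
        fun d hd hlt => lt_of_not_ge fun hdx => (le_anchor hd hdx).not_gt hlt⟩
    · rintro ⟨hc, hcx, hnext⟩
      refine le_antisymm (le_of_not_gt fun hlt => ?_) (le_anchor hc hcx.le)
      exact (hnext _ (anchor_mem h0 x) hlt).not_ge anchor_le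

theorem ordConnected_block_fiber (h0 : 0 ∈ C) (c : Fin n) :
    ((univ.filter (block C · = some c) : Finset (Fin n)) : Set (Fin n)).OrdConnected := by
  refine ⟨fun x hx z hz y hy => ?_⟩
  simp only [coe_filter, mem_univ, true_and, Set.mem_ofPred_eq, block_eq_some_iff h0] at hx hz ⊢
  exact ⟨hx.1, hx.2.1.trans_le hy.1, fun d hd hcd => hy.2.trans_lt (hz.2.2 d hd hcd)⟩

theorem card_block_fiber (h0 : 0 ∈ C) (hc : c ∈ C) :
    Fintype.card {x // block C x = some c} = nextAbove n (C.map Fin.valEmbedding) c - c - 1 := by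
  rw [Fintype.card_subtype, ← card_map Fin.valEmbedding, ← Nat.card_Ioo]
  congr 1
  ext m
  simp only [mem_map, mem_filter, mem_univ, true_and, block_eq_some_iff h0, mem_Ioo,
    lt_nextAbove_iff, Fin.valEmbedding_apply]
  constructor
  · rintro ⟨x, ⟨-, hcx, hnext⟩, rfl⟩
    refine ⟨hcx, x.isLt, ?_⟩
    rintro - ⟨d, hd, rfl⟩ hcd
    exact hnext d hd hcd
  · rintro ⟨hcm, hmn, hnext⟩
    exact ⟨⟨m, hmn⟩, ⟨hc, hcm, fun d hd hcd => hnext d ⟨d, hd, rfl⟩ hcd⟩, rfl⟩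

theorem card_block_fiber_of_notMem (h0 : 0 ∈ C) (hc : c ∉ C) :
    Fintype.card {x // block C x = some c} = 0 :=
  Fintype.card_eq_zero_iff.mpr ⟨fun x => hc ((block_eq_some_iff h0).mp x.2).1⟩

theorem prod_factorial_card_block_fiber (h0 : 0 ∈ C) :
    ∏ c : Fin n, (Fintype.card {x // block C x = some c}).factorial =
      gapWeight n (C.map Fin.valEmbedding) := by
  rw [gapWeight, prod_map, ← prod_subset (subset_univ C)]
  · exact prod_congr rfl fun c hc => by rw [card_block_fiber h0 hc]; rfl
  · intro c _ hc
    rw [card_block_fiber_of_notMem h0 hc, Nat.factorial_zero]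

theorem apply_mem_iff (hπ : block C ∘ π = block C) : π x ∈ C ↔ x ∈ C := by
  rw [← block_eq_none_iff, ← block_eq_none_iff, ← Function.comp_apply (f := block C), hπ]

variable (C) in
noncomputable def coreEquiv : Fin C.card ≃ {x // block C x = none} :=
  (C.orderIsoOfFin rfl).toEquiv.trans (subtypeEquivRight fun _ => block_eq_none_iff.symm)

variable (C) in
noncomputable def corePattern : Perm {x // block C x = none} ≃ Perm (Fin C.card) :=
  (coreEquiv C).symm.permCongr

theorem orderEmbOfFin_corePattern (σ : Perm {x // block C x = none}) (l : Fin C.card) :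
    C.orderEmbOfFin rfl (corePattern C σ l) = σ (coreEquiv C l) := by
  rw [← coe_orderIsoOfFin_apply]
  simp [corePattern, coreEquiv, permCongr_apply]

noncomputable def pattern (π : Perm (Fin n)) (hπ : block C ∘ π = block C) :
    Perm (Fin C.card) :=
  corePattern C (Perm.fiberwiseEquiv (block C) ⟨π, hπ⟩ none)

theorem orderEmbOfFin_pattern (hπ : block C ∘ π = block C) (l : Fin C.card) :
    C.orderEmbOfFin rfl (pattern π hπ l) = π (C.orderEmbOfFin rfl l) := by
  rw [pattern, orderEmbOfFin_corePattern, Perm.fiberwiseEquiv_apply]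
  rfl

noncomputable def coreIndex (h0 : 0 ∈ C) (x : Fin n) : Fin C.card :=
  (C.orderIsoOfFin rfl).symm ⟨anchor C x, anchor_mem h0 x⟩

theorem coreIndex_mono (h0 : 0 ∈ C) : Monotone (coreIndex h0) :=
  fun _ _ hxy => (C.orderIsoOfFin rfl).symm.monotone (Subtype.mk_le_mk.mpr (anchor_mono hxy))

theorem orderEmbOfFin_coreIndex (h0 : 0 ∈ C) (x : Fin n) :
    C.orderEmbOfFin rfl (coreIndex h0 x) = anchor C x := by
  rw [← coe_orderIsoOfFin_apply, coreIndex, OrderIso.apply_symm_apply]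

theorem coreIndex_orderEmbOfFin (h0 : 0 ∈ C) (l : Fin C.card) :
    coreIndex h0 (C.orderEmbOfFin rfl l) = l :=
  (C.orderEmbOfFin rfl).injective (by
    rw [orderEmbOfFin_coreIndex, anchor_eq_self (orderEmbOfFin_mem C rfl l)])

theorem isBot_coreIndex_zero (h0 : 0 ∈ C) : IsBot (coreIndex h0 0) :=
  fun l => coreIndex_orderEmbOfFin h0 l ▸ coreIndex_mono h0 (Fin.zero_le _)

theorem coreIndex_apply_mem_iff (h0 : 0 ∈ C) (hπ : block C ∘ π = block C)
    {T : Finset (Fin C.card)} (hT : ∀ l, pattern π hπ l ∈ T ↔ l ∈ T) (x : Fin n) :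
    coreIndex h0 (π x) ∈ T ↔ coreIndex h0 x ∈ T := by
  by_cases hx : x ∈ C
  · suffices coreIndex h0 (π x) = pattern π hπ (coreIndex h0 x) by rw [this, hT]
    apply (C.orderEmbOfFin rfl).injective
    rw [orderEmbOfFin_pattern, orderEmbOfFin_coreIndex, orderEmbOfFin_coreIndex,
      anchor_eq_self hx, anchor_eq_self ((apply_mem_iff hπ).mpr hx)]
  · have h := congrFun hπ x
    simp only [Function.comp_apply, block, hx, (apply_mem_iff hπ).not.mpr hx, if_false,
      Option.some_inj] at h
    simp only [coreIndex, h]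

open scoped Classical in
/-- The points of `π` lying in no `π`-stable interval that avoids `0`. -/
noncomputable def core (π : Perm (Fin n)) : Finset (Fin n) :=
  univ.filter fun x => ∀ S : Finset (Fin n), (S : Set (Fin n)).OrdConnected →
    (∀ y, π y ∈ S ↔ y ∈ S) → x ∈ S → 0 ∈ S

theorem mem_core : x ∈ core π ↔ ∀ S : Finset (Fin n),
    (S : Set (Fin n)).OrdConnected → (∀ y, π y ∈ S ↔ y ∈ S) → x ∈ S → 0 ∈ S := by
  simp [core]

theorem zero_mem_core (π : Perm (Fin n)) : 0 ∈ core π :=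
  mem_core.mpr fun _ _ _ h => h

theorem apply_mem_core_iff (π : Perm (Fin n)) : π x ∈ core π ↔ x ∈ core π := by
  simp only [mem_core]
  exact forall_congr' fun S => imp_congr_right fun _ => forall_congr' fun hS => by rw [hS]

theorem block_core_comp (π : Perm (Fin n)) : block (core π) ∘ π = block (core π) := by
  funext x
  by_cases hx : x ∈ core π
  · simp [block, hx, apply_mem_core_iff]
  · obtain ⟨S, hS, hstab, hxS, h0S⟩ : ∃ S : Finset (Fin n), (S : Set (Fin n)).OrdConnected ∧
        (∀ y, π y ∈ S ↔ y ∈ S) ∧ x ∈ S ∧ 0 ∉ S := by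
      simpa [mem_core] using hx
    have hSC : ∀ z ∈ S, z ∉ core π := fun z hz hzC => h0S (mem_core.mp hzC S hS hstab hz)
    simp only [Function.comp_apply, block, hx, (apply_mem_core_iff π).not.mpr hx, if_false,
      anchor_eq_of_ordConnected (zero_mem_core π) hS hSC ((hstab x).mpr hxS) hxS]

theorem sif_pattern_core (π : Perm (Fin n)) : SIF (pattern π (block_core_comp π)) := by
  have h0 := zero_mem_core π
  refine sif_iff_isLowerSet.mpr fun T hT hstab a b hba ha => ?_
  -- the points whose anchor has its index in `T` form a stable interval through a core point
  let I : Finset (Fin n) := univ.filter (coreIndex h0 · ∈ T)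
  have hI : (I : Set (Fin n)).OrdConnected := by
    simp only [I, coe_filter, mem_univ, true_and]
    exact hT.preimage_mono (coreIndex_mono h0)
  have hcore := mem_core.mp (orderEmbOfFin_mem (core π) rfl a) I hI
    (fun y => by simp [I, coreIndex_apply_mem_iff h0 _ hstab])
    (by simpa [I, coreIndex_orderEmbOfFin])
  exact hT.isLowerSet_of_isBot (isBot_coreIndex_zero h0) (by simpa [I] using hcore) hba ha

theorem core_eq_of_sif (h0 : 0 ∈ C) (hπ : block C ∘ π = block C) (hσ : SIF (pattern π hπ)) :
    core π = C := by
  ext x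
  constructor
  · intro hx
    by_contra hxC
    let B : Finset (Fin n) := univ.filter (block C · = some (anchor C x))
    have h0B := mem_core.mp hx B (ordConnected_block_fiber h0 _)
      (fun y => by simp only [B, mem_filter, mem_univ, true_and, ← congrFun hπ y,
        Function.comp_apply]) (by simp [B, block, hxC])
    simp [B, block, h0] at h0B
  · intro hxC
    refine mem_core.mpr fun S hS hstab hxS => ?_
    let T : Finset (Fin C.card) := univ.filter (C.orderEmbOfFin rfl · ∈ S)
    have hT : (T : Set (Fin C.card)).OrdConnected := by
      simp only [T, coe_filter, mem_univ, true_and]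
      exact hS.preimage_mono (C.orderEmbOfFin rfl).monotone
    have hlow := sif_iff_isLowerSet.mp hσ T hT (fun l => by simp [T, orderEmbOfFin_pattern, hstab])
    have := hlow (coreIndex_mono h0 (Fin.zero_le x))
      (by simp [T, orderEmbOfFin_coreIndex, anchor_eq_self hxC, hxS])
    simpa [T, orderEmbOfFin_coreIndex, anchor_eq_self h0] using this

theorem core_eq_iff (h0 : 0 ∈ C) :
    core π = C ↔ ∃ hπ : block C ∘ π = block C, SIF (pattern π hπ) :=
  ⟨by rintro rfl; exact ⟨_, sif_pattern_core π⟩,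
    fun ⟨hπ, hσ⟩ => core_eq_of_sif h0 hπ hσ⟩

theorem card_core_eq (h0 : 0 ∈ C) :
    Nat.card {π : Perm (Fin n) // core π = C} =
      sifCount C.card * gapWeight n (C.map Fin.valEmbedding) := by
  let e := (subtypeEquivRight fun π => core_eq_iff h0).trans
    ((subtypeSubtypeEquivSubtypeExists _ _).symm.trans
    ((subtypeEquiv (Perm.fiberwiseEquiv (block C)) fun _ => Iff.rfl).trans
    ((subtypeEquiv piOptionEquivProd fun _ => Iff.rfl).trans
      (prodSubtypeFstEquivSubtypeProd (p := fun σ => SIF (corePattern C σ))))))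
  rw [Nat.card_congr e, Nat.card_prod, Nat.card_pi, sifCount,
    Nat.card_congr (subtypeEquiv (corePattern C) fun _ => Iff.rfl),
    ← prod_factorial_card_block_fiber h0]
  congr 1
  exact prod_congr rfl fun c _ => by rw [Nat.card_perm, Nat.card_eq_fintype_card]

theorem powersetCardWithZero_eq_map (k : ℕ) :
    powersetCardWithZero n k = ((univ.powersetCard k).filter ((0 : Fin n) ∈ ·)).map
      (mapEmbedding Fin.valEmbedding).toEmbedding := by
  rw [powersetCardWithZero, ← Nat.Iio_eq_range, ← Fin.map_valEmbedding_univ, powersetCard_map,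
    filter_map]
  congr 1
  ext C
  simp [NeZero.pos n]

theorem card_perm_eq_sum : Fintype.card (Perm (Fin n)) =
    ∑ k ∈ range (n + 1), sifCount k * ∑ D ∈ powersetCardWithZero n k, gapWeight n D := by
  rw [← Nat.card_eq_fintype_card, Nat.card_congr (sigmaFiberEquiv core).symm, Nat.card_sigma,
    ← powerset_univ, sum_powerset, card_univ, Fintype.card_fin]
  refine sum_congr rfl fun k _ => ?_
  rw [powersetCardWithZero_eq_map, sum_map, mul_sum, sum_filter]
  refine sum_congr rfl fun C hC => ?_
  split_ifs with h0
  · rw [card_core_eq h0, (mem_powersetCard.mp hC).2]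
    rfl
  · exact Nat.card_eq_zero.mpr (Or.inl ⟨fun π => h0 (π.2 ▸ zero_mem_core π.1)⟩)

end SIF

theorem factorial_eq_sum_sifCount_mul_coeff_F_pow (n : ℕ) :
    (n.factorial : ℚ) = ∑ k ∈ range (n + 1), (sifCount k : ℚ) * coeff n (F ^ k) := by
  simp_rw [coeff_F_pow]
  rcases n with _ | n
  · simp [powersetCardWithZero, gapWeight, sifCount, SIF]
  · have := SIF.card_perm_eq_sum (n := n + 1)
    rw [Fintype.card_perm, Fintype.card_fin] at this
    exact_mod_cast this

theorem F_eq_X_mul_subst_A : F = X * A.subst F := by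
  ext (_ | n)
  · simp [coeff_zero_eq_constantCoeff, constantCoeff_F]
  · rw [coeff_succ_F, coeff_succ_X_mul, coeff_subst_eq_sum constantCoeff_F,
      factorial_eq_sum_sifCount_mul_coeff_F_pow n]
    simp [A]

/-- `A(X)·F^{<-1>}(X) = X` in `ℚ[[X]]`. -/
theorem A_mul_compInv (G : PowerSeries ℚ) (hG : IsCompInvOfF G) :
    A * G = (PowerSeries.X : PowerSeries ℚ) := by
  have hG' : HasSubst G := .of_constantCoeff_zero' hG.1
  calc A * G = (X * A.subst F).subst G := by
        rw [subst_mul hG', subst_X hG',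
          subst_comp_subst_apply (.of_constantCoeff_zero' constantCoeff_F) hG', hG.subst_F,
          X_subst, mul_comm]
    _ = X := by rw [← F_eq_X_mul_subst_A, hG.subst_F]
end
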